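/- Let (E,F) be a test pair, S an admissible pair of scales, and T ∈ L(E,E) with T|_F ∈ L(F,F). If (Φ_ε)_ε ∈ TO(E,F,S) is a test object, then (T∘Φ_ε − Φ_ε∘T)_ε is a 0-test object in TO⁰(E,F,S); the same holds if (Φ_ε)_ε ∈ TO⁰(E,F,S). -/

import Mathlib

open Filter Set

noncomputable section

def eps0 : Filter ℝ := nhdsWithin 0 (Set.Ioc 0 1)

def GrowthScale (A : Set (ℝ → ℝ)) : Prop :=
  (∀ lam ∈ A, ∀ ε ∈ Set.Ioc (0:ℝ) 1, 0 ≤ lam ε) ∧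
  (∀ lam ∈ A, ∀ mu ∈ A, ∃ nu ∈ A, (fun ε => lam ε + mu ε) =O[eps0] nu) ∧
  (∀ lam ∈ A, ∀ mu ∈ A, ∃ nu ∈ A, (fun ε => lam ε * mu ε) =O[eps0] nu) ∧
  (∃ lam ∈ A, 0 < Filter.liminf lam eps0)

def DecayScale (I : Set (ℝ → ℝ)) : Prop :=
  (∀ lam ∈ I, ∀ ε ∈ Set.Ioc (0:ℝ) 1, 0 ≤ lam ε) ∧
  (∀ lam ∈ I, ∃ mu ∈ I, ∃ nu ∈ I, (fun ε => mu ε + nu ε) =O[eps0] lam) ∧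
  (∀ lam ∈ I, ∃ mu ∈ I, ∃ nu ∈ I, (fun ε => mu ε * nu ε) =O[eps0] lam) ∧
  (∃ lam ∈ I, Filter.Tendsto lam eps0 (nhds 0))

def AdmissiblePair (A I : Set (ℝ → ℝ)) : Prop :=
  GrowthScale A ∧ DecayScale I ∧
  (∀ lam ∈ I, ∀ mu ∈ A, ∃ nu ∈ I, (fun ε => mu ε * nu ε) =O[eps0] lam) ∧
  (∃ lam ∈ A, ∃ mu ∈ I, mu =O[eps0] lam)

variable {E F : Type*}
  [AddCommGroup E] [Module ℝ E] [TopologicalSpace E] [IsTopologicalAddGroup E]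
  [ContinuousConstSMul ℝ E]
  [AddCommGroup F] [Module ℝ F] [TopologicalSpace F] [IsTopologicalAddGroup F]
  [ContinuousConstSMul ℝ F]

/-- The weak (simple convergence) topology on `L(E,F)`. -/
def simpleTop (E F : Type*) [AddCommGroup E] [Module ℝ E] [TopologicalSpace E]
    [AddCommGroup F] [Module ℝ F] [TopologicalSpace F] :
    TopologicalSpace (E →L[ℝ] F) :=
  TopologicalSpace.induced (fun Φ : E →L[ℝ] F => (Φ : E → F)) Pi.topologicalSpace

/-- Test objects `TO(E,F,S)` for a test pair given by `j : F →L E` and scales `(A,I)`. -/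
def IsTestObject (A I : Set (ℝ → ℝ)) (j : F →L[ℝ] E) (Φ : ℝ → (E →L[ℝ] F)) : Prop :=
  (∀ p : Seminorm ℝ (E →L[ℝ] F), @Continuous _ _ (simpleTop E F) _ p →
    ∃ lam ∈ A, (fun ε => p (Φ ε)) =O[eps0] lam) ∧
  (∀ p : Seminorm ℝ (F →L[ℝ] F), @Continuous _ _ (simpleTop F F) _ p →
    ∀ lam ∈ I, (fun ε => p ((Φ ε).comp j - ContinuousLinearMap.id ℝ F)) =O[eps0] lam) ∧
  Filter.Tendsto (fun ε => j.comp (Φ ε)) eps0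
    (@nhds _ (simpleTop E E) (ContinuousLinearMap.id ℝ E))

/-- 0-test objects `TO⁰(E,F,S)`. -/
def IsZeroTestObject (A I : Set (ℝ → ℝ)) (j : F →L[ℝ] E) (Φ : ℝ → (E →L[ℝ] F)) : Prop :=
  (∀ p : Seminorm ℝ (E →L[ℝ] F), @Continuous _ _ (simpleTop E F) _ p →
    ∃ lam ∈ A, (fun ε => p (Φ ε)) =O[eps0] lam) ∧
  (∀ p : Seminorm ℝ (F →L[ℝ] F), @Continuous _ _ (simpleTop F F) _ p →
    ∀ lam ∈ I, (fun ε => p ((Φ ε).comp j)) =O[eps0] lam) ∧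
  Filter.Tendsto (fun ε => j.comp (Φ ε)) eps0 (@nhds _ (simpleTop E E) 0)

section Commutator

variable {V W : Type*} [AddCommGroup V] [Module ℝ V] [TopologicalSpace V]
  [AddCommGroup W] [Module ℝ W] [TopologicalSpace W]

theorem continuous_apply_simpleTop (v : V) :
    @Continuous _ _ (simpleTop V W) _ fun S : V →L[ℝ] W => S v := by
  let := simpleTop V W
  exact (continuous_apply v).comp continuous_induced_dom

variable [IsTopologicalAddGroup W] [ContinuousConstSMul ℝ W]

def commutatorₗ (T₁ : W →L[ℝ] W) (T₂ : V →L[ℝ] V) : (V →L[ℝ] W) →ₗ[ℝ] (V →L[ℝ] W) where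
  toFun S := T₁.comp S - S.comp T₂
  map_add' S₁ S₂ := by
    simp only [ContinuousLinearMap.comp_add, ContinuousLinearMap.add_comp]
    abel
  map_smul' c S := by
    simp [smul_sub]

@[simp]
theorem commutatorₗ_apply (T₁ : W →L[ℝ] W) (T₂ : V →L[ℝ] V) (S : V →L[ℝ] W) :
    commutatorₗ T₁ T₂ S = T₁.comp S - S.comp T₂ :=
  rfl

@[simp]
theorem commutatorₗ_id (T : W →L[ℝ] W) : commutatorₗ T T (ContinuousLinearMap.id ℝ W) = 0 := by
  ext; simp

theorem continuous_commutatorₗ (T₁ : W →L[ℝ] W) (T₂ : V →L[ℝ] V) :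
    @Continuous _ _ (simpleTop V W) (simpleTop V W) (commutatorₗ T₁ T₂) := by
  let := simpleTop V W
  exact continuous_induced_rng.mpr <| continuous_pi fun v =>
    (T₁.continuous.comp (continuous_apply_simpleTop v)).sub (continuous_apply_simpleTop (T₂ v))

theorem Continuous.seminorm_comp_commutatorₗ {p : Seminorm ℝ (V →L[ℝ] W)}
    (hp : @Continuous _ _ (simpleTop V W) _ p) (T₁ : W →L[ℝ] W) (T₂ : V →L[ℝ] V) :
    @Continuous _ _ (simpleTop V W) _ (p.comp (commutatorₗ T₁ T₂)) := by
  let := simpleTop V W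
  exact hp.comp (continuous_commutatorₗ T₁ T₂)

theorem Filter.Tendsto.commutatorₗ {α : Type*} {l : Filter α} {f : α → V →L[ℝ] W}
    {S : V →L[ℝ] W} (hf : Tendsto f l (@nhds _ (simpleTop V W) S))
    (T₁ : W →L[ℝ] W) (T₂ : V →L[ℝ] V) :
    Tendsto (fun a => commutatorₗ T₁ T₂ (f a)) l
      (@nhds _ (simpleTop V W) (commutatorₗ T₁ T₂ S)) := by
  let := simpleTop V W
  exact ((continuous_commutatorₗ T₁ T₂).tendsto S).comp hf

theorem commutatorₗ_comp_of_intertwines {j : W →L[ℝ] V} {T : V →L[ℝ] V} {Tf : W →L[ℝ] W}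
    (hcompat : ∀ w : W, j (Tf w) = T (j w)) (S : V →L[ℝ] W) :
    (commutatorₗ Tf T S).comp j = commutatorₗ Tf Tf (S.comp j) := by
  ext w
  simp [hcompat]

theorem comp_commutatorₗ_of_intertwines [IsTopologicalAddGroup V] [ContinuousConstSMul ℝ V]
    {j : W →L[ℝ] V} {T : V →L[ℝ] V} {Tf : W →L[ℝ] W}
    (hcompat : ∀ w : W, j (Tf w) = T (j w)) (S : V →L[ℝ] W) :
    j.comp (commutatorₗ Tf T S) = commutatorₗ T T (j.comp S) := by
  ext v
  simp [hcompat]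

end Commutator

theorem commutator_zeroTestObject_general (A I : Set (ℝ → ℝ))
    (j : F →L[ℝ] E)
    (T : E →L[ℝ] E) (Tf : F →L[ℝ] F) (hcompat : ∀ φ : F, j (Tf φ) = T (j φ))
    (Φ : ℝ → (E →L[ℝ] F))
    (hΦ : IsTestObject A I j Φ ∨ IsZeroTestObject A I j Φ) :
    IsZeroTestObject A I j (fun ε => Tf.comp (Φ ε) - (Φ ε).comp T) := by
  -- A test object is anchored at `id`, a 0-test object at `0`; the commutator kills both, which
  -- is the identity `T∘Φ − Φ∘T = T∘(Φ − id) − (Φ − id)∘T` on `F`.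
  obtain ⟨aF, aE, haF, haE, hbound, hlim⟩ : ∃ aF aE,
      commutatorₗ Tf Tf aF = 0 ∧ commutatorₗ T T aE = 0 ∧
      (∀ p : Seminorm ℝ (F →L[ℝ] F), @Continuous _ _ (simpleTop F F) _ p →
        ∀ lam ∈ I, (fun ε => p ((Φ ε).comp j - aF)) =O[eps0] lam) ∧
      Tendsto (fun ε => j.comp (Φ ε)) eps0 (@nhds _ (simpleTop E E) aE) := by
    rcases hΦ with hΦ | hΦ
    · exact ⟨_, _, commutatorₗ_id Tf, commutatorₗ_id T, hΦ.2.1, hΦ.2.2⟩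
    · exact ⟨0, 0, map_zero _, map_zero _, by simpa using hΦ.2.1, hΦ.2.2⟩
  refine ⟨fun p hp => ?_, fun p hp lam hlam => ?_, ?_⟩
  · exact (hΦ.elim (·.1) (·.1)) (p.comp (commutatorₗ Tf T)) (hp.seminorm_comp_commutatorₗ Tf T)
  · have h := hbound (p.comp (commutatorₗ Tf Tf)) (hp.seminorm_comp_commutatorₗ Tf Tf) lam hlam
    simp only [Seminorm.comp_apply, map_sub, haF, sub_zero,
      ← commutatorₗ_comp_of_intertwines hcompat] at h
    exact h
  · simpa [haE, ← comp_commutatorₗ_of_intertwines hcompat] using hlim.commutatorₗ T T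

/-- If `T ∈ L(E,E)` restricts to `L(F,F)`, then `(T∘Φ_ε − Φ_ε∘T)_ε` is a 0-test object
for every test object or 0-test object `(Φ_ε)_ε`. -/
theorem commutator_zeroTestObject (A I : Set (ℝ → ℝ)) (hadm : AdmissiblePair A I)
    (j : F →L[ℝ] E) (hj : Function.Injective j)
    (T : E →L[ℝ] E) (Tf : F →L[ℝ] F) (hcompat : ∀ φ : F, j (Tf φ) = T (j φ))
    (Φ : ℝ → (E →L[ℝ] F))
    (hΦ : IsTestObject A I j Φ ∨ IsZeroTestObject A I j Φ) :
    IsZeroTestObject A I j (fun ε => Tf.comp (Φ ε) - (Φ ε).comp T) :=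
  commutator_zeroTestObject_general A I j T Tf hcompat Φ hΦ

end
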